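/- Let ρ(x) = Ψ(x)/D(x)^α with Ψ, D C¹, Ψ ≥ 0, D > 0 on X̄, and α > 0. Let f_δ : ℝⁿ → ℝⁿ be C¹. Suppose: ‖f_δ(x)‖ ≤ c₁, |div f_δ(x)| ≤ c₂, ‖∇D(x)/D(x)‖ ≤ c_D, and ‖∇Ψ(x)‖ ≤ c_Ψ Ψ(x) for all x ∈ X̄, where c₁, c₂, c_D, c_Ψ are positive constants. Then |div(f_δ ρ)(x)| ≤ γ ρ(x) for all x ∈ X̄, where γ = c₂ + α c₁ c_D + c₁ c_Ψ. -/

import Mathlib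

/-! The product rule gives `div (ρ f) = ρ div f + ⟪∇ρ, f⟫`, and differentiating `ρ = Ψ D^(-α)` gives
`∇ρ = D^(-α) ∇Ψ - α ρ ∇D / D`. The hypotheses bound this gradient by `(α c_D + c_Ψ) ρ`, and
Cauchy–Schwarz against `‖f‖ ≤ c₁` finishes. -/

open Real

noncomputable def diverg {n : ℕ}
    (F : EuclideanSpace ℝ (Fin n) → EuclideanSpace ℝ (Fin n))
    (x : EuclideanSpace ℝ (Fin n)) : ℝ :=
  ∑ i, fderiv ℝ F x (EuclideanSpace.single i 1) i

open InnerProductSpace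

section GradientOfQuotient

variable {E : Type*} [NormedAddCommGroup E] [InnerProductSpace ℝ E] [CompleteSpace E]
  {Ψ D : E → ℝ} {x : E} {α : ℝ}

theorem hasGradientAt_div_rpow (hΨ : DifferentiableAt ℝ Ψ x) (hD : DifferentiableAt ℝ D x)
    (hDx : 0 < D x) :
    HasGradientAt (fun y => Ψ y / D y ^ α)
      ((D x ^ α)⁻¹ • gradient Ψ x - (α * (Ψ x / D x ^ α)) • ((D x)⁻¹ • gradient D x)) x := by
  rw [hasGradientAt_iff_hasFDerivAt]
  have hprod := hΨ.hasFDerivAt.mul (hD.hasFDerivAt.rpow_const (p := -α) (Or.inl hDx.ne'))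
  have hquot : (fun y => Ψ y / D y ^ α) =ᶠ[nhds x] fun y => Ψ y * D y ^ (-α) := by
    filter_upwards [hD.continuousAt.eventually (lt_mem_nhds hDx)] with y hy
    rw [rpow_neg hy.le, div_eq_mul_inv]
  refine (hprod.congr_of_eventuallyEq hquot).congr_fderiv ?_
  ext v
  have hpow : D x ^ (-α - 1) = (D x ^ α)⁻¹ * (D x)⁻¹ := by
    rw [rpow_sub_one hDx.ne', rpow_neg hDx.le, div_eq_mul_inv]
  simp only [toDual_apply_apply, inner_sub_left, inner_smul_left, inner_gradient_left,
    add_apply, smul_apply, smul_eq_mul, hpow, rpow_neg hDx.le, RCLike.conj_to_real]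
  ring

theorem norm_gradient_div_rpow_le {cD cΨ : ℝ} (hΨ : DifferentiableAt ℝ Ψ x)
    (hD : DifferentiableAt ℝ D x) (hDx : 0 < D x) (hα : 0 ≤ α) (hΨx : 0 ≤ Ψ x)
    (hgradD : ‖(D x)⁻¹ • gradient D x‖ ≤ cD) (hgradΨ : ‖gradient Ψ x‖ ≤ cΨ * Ψ x) :
    ‖gradient (fun y => Ψ y / D y ^ α) x‖ ≤ (α * cD + cΨ) * (Ψ x / D x ^ α) := by
  have hDα : 0 < D x ^ α := rpow_pos_of_pos hDx α
  have hρx : 0 ≤ Ψ x / D x ^ α := div_nonneg hΨx hDα.le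
  rw [(hasGradientAt_div_rpow hΨ hD hDx).gradient]
  calc _ ≤ ‖(D x ^ α)⁻¹ • gradient Ψ x‖ + ‖(α * (Ψ x / D x ^ α)) • ((D x)⁻¹ • gradient D x)‖ :=
        norm_sub_le _ _
    _ = (D x ^ α)⁻¹ * ‖gradient Ψ x‖ + α * (Ψ x / D x ^ α) * ‖(D x)⁻¹ • gradient D x‖ := by
        rw [norm_smul, norm_smul, norm_inv, norm_of_nonneg hDα.le,
          norm_of_nonneg (mul_nonneg hα hρx)]
    _ ≤ (D x ^ α)⁻¹ * (cΨ * Ψ x) + α * (Ψ x / D x ^ α) * cD := by gcongr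
    _ = (α * cD + cΨ) * (Ψ x / D x ^ α) := by ring

end GradientOfQuotient

theorem diverg_smul {n : ℕ} {ρ : EuclideanSpace ℝ (Fin n) → ℝ}
    {F : EuclideanSpace ℝ (Fin n) → EuclideanSpace ℝ (Fin n)} {x : EuclideanSpace ℝ (Fin n)}
    (hρ : DifferentiableAt ℝ ρ x) (hF : DifferentiableAt ℝ F x) :
    diverg (fun y => ρ y • F y) x = ρ x * diverg F x + inner ℝ (gradient ρ x) (F x) := by
  have hprod : HasFDerivAt (fun y => ρ y • F y)
      (ρ x • fderiv ℝ F x + (fderiv ℝ ρ x).smulRight (F x)) x :=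
    hρ.hasFDerivAt.smul hF.hasFDerivAt
  have hcoord (i : Fin n) : fderiv ℝ ρ x (EuclideanSpace.single i 1) = gradient ρ x i := by
    rw [← inner_gradient_left, EuclideanSpace.inner_single_right, one_mul, RCLike.conj_to_real]
  simp only [diverg, hprod.fderiv, PiLp.inner_apply, Finset.mul_sum, ← Finset.sum_add_distrib]
  simp [hcoord, mul_comm]

theorem stmt5_general {n : ℕ}
    (Ψ D : EuclideanSpace ℝ (Fin n) → ℝ)
    (Xbar : Set (EuclideanSpace ℝ (Fin n)))
    (hΨ : ContDiff ℝ 1 Ψ) (hΨnonneg : ∀ x, 0 ≤ Ψ x)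
    (hD : ContDiff ℝ 1 D) (hDpos : ∀ x ∈ Xbar, 0 < D x)
    (α : ℝ) (hα : 0 < α)
    (ρ : EuclideanSpace ℝ (Fin n) → ℝ)
    (hρ : ∀ x, ρ x = Ψ x / (D x) ^ α)
    (fδ : EuclideanSpace ℝ (Fin n) → EuclideanSpace ℝ (Fin n))
    (hfδ : ContDiff ℝ 1 fδ)
    (c₁ c₂ cD cΨ : ℝ)
    (hb₁ : ∀ x ∈ Xbar, ‖fδ x‖ ≤ c₁)
    (hb₂ : ∀ x ∈ Xbar, |diverg fδ x| ≤ c₂)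
    (hb₃ : ∀ x ∈ Xbar, ‖(D x)⁻¹ • gradient D x‖ ≤ cD)
    (hb₄ : ∀ x ∈ Xbar, ‖gradient Ψ x‖ ≤ cΨ * Ψ x) :
    ∀ x ∈ Xbar,
      |diverg (fun y => ρ y • fδ y) x| ≤ (c₂ + α * c₁ * cD + c₁ * cΨ) * ρ x := by
  intro x hx
  obtain rfl : ρ = fun y => Ψ y / D y ^ α := funext hρ
  have hΨx := hΨ.differentiable one_ne_zero x
  have hDx := hD.differentiable one_ne_zero x
  have hρx : 0 ≤ Ψ x / D x ^ α := div_nonneg (hΨnonneg x) (rpow_nonneg (hDpos x hx).le α)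
  have hgrad := norm_gradient_div_rpow_le hΨx hDx (hDpos x hx) hα.le (hΨnonneg x)
    (hb₃ x hx) (hb₄ x hx)
  rw [diverg_smul (hasGradientAt_div_rpow hΨx hDx (hDpos x hx)).differentiableAt
    (hfδ.differentiable one_ne_zero x)]
  calc _ ≤ Ψ x / D x ^ α * |diverg fδ x| + ‖fδ x‖ * ‖gradient (fun y => Ψ y / D y ^ α) x‖ := by
        refine (abs_add_le _ _).trans (add_le_add (by rw [abs_mul, abs_of_nonneg hρx]) ?_)
        rw [mul_comm]
        exact abs_real_inner_le_norm _ _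
    _ ≤ Ψ x / D x ^ α * c₂ + c₁ * ((α * cD + cΨ) * (Ψ x / D x ^ α)) := by
        gcongr
        exacts [hb₂ x hx, (norm_nonneg _).trans (hb₁ x hx), hb₁ x hx]
    _ = _ := by ring

/-- Robustness estimate: for `ρ = Ψ/D^α` with the stated bounds on the perturbation
`f_δ` and on `∇D/D`, `∇Ψ`, one has `|div(f_δ ρ)(x)| ≤ γ ρ(x)` on `X̄`,
where `γ = c₂ + α c₁ c_D + c₁ c_Ψ`. -/
theorem stmt5 {n : ℕ}
    (Ψ D : EuclideanSpace ℝ (Fin n) → ℝ)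
    (Xbar : Set (EuclideanSpace ℝ (Fin n))) (hXbar : IsOpen Xbar)
    (hΨ : ContDiff ℝ 1 Ψ) (hΨnonneg : ∀ x, 0 ≤ Ψ x)
    (hD : ContDiff ℝ 1 D) (hDpos : ∀ x ∈ Xbar, 0 < D x)
    (α : ℝ) (hα : 0 < α)
    (ρ : EuclideanSpace ℝ (Fin n) → ℝ)
    (hρ : ∀ x, ρ x = Ψ x / (D x) ^ α)
    (fδ : EuclideanSpace ℝ (Fin n) → EuclideanSpace ℝ (Fin n))
    (hfδ : ContDiff ℝ 1 fδ)
    (c₁ c₂ cD cΨ : ℝ) (hc₁ : 0 < c₁) (hc₂ : 0 < c₂) (hcD : 0 < cD) (hcΨ : 0 < cΨ)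
    (hb₁ : ∀ x ∈ Xbar, ‖fδ x‖ ≤ c₁)
    (hb₂ : ∀ x ∈ Xbar, |diverg fδ x| ≤ c₂)
    (hb₃ : ∀ x ∈ Xbar, ‖(D x)⁻¹ • gradient D x‖ ≤ cD)
    (hb₄ : ∀ x ∈ Xbar, ‖gradient Ψ x‖ ≤ cΨ * Ψ x) :
    ∀ x ∈ Xbar,
      |diverg (fun y => ρ y • fδ y) x| ≤ (c₂ + α * c₁ * cD + c₁ * cΨ) * ρ x :=
  stmt5_general Ψ D Xbar hΨ hΨnonneg hD hDpos α hα ρ hρ fδ hfδ c₁ c₂ cD cΨ hb₁ hb₂ hb₃ hb₄
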